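/- In the BCD setting with step sizes c_k = d_k = 1/(γl) for some γ > 1: there exists ρ > 0 such that for every k there exists dΨ ∈ ∂̂Ψ(z^{k+1}) (the Fréchet subdifferential of Ψ at z^{k+1}) with ‖dΨ‖ ≤ ρ‖z^{k+1} - z^k‖. -/

import Mathlib

open Filter Topology Set
open scoped RealInnerProductSpace

variable {E : Type*} [NormedAddCommGroup E] [InnerProductSpace ℝ E]
variable {F : Type*} [NormedAddCommGroup F] [InnerProductSpace ℝ F]

/-- The Fréchet subdifferential of `f` at `x`. -/
noncomputable def f_subdifferential (f : E → ℝ) (x : E) : Set E :=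
  {u : E | Filter.liminf
    (fun y => (((f y - f x - ⟪u, y - x⟫) / ‖y - x‖ : ℝ) : EReal)) (𝓝[≠] x) ≥ 0}

/-- The limiting subdifferential of `f` at `x`. -/
noncomputable def subdifferential (f : E → ℝ) (x : E) : Set E :=
  {v₀ : E | ∃ u : ℕ → E, Tendsto u atTop (𝓝 x) ∧
    Tendsto (fun n => f (u n)) atTop (𝓝 (f x)) ∧
    ∃ v : ℕ → E, (∀ n, v n ∈ f_subdifferential f (u n)) ∧ Tendsto v atTop (𝓝 v₀)}

/-- `prox_prop f y x` means that `x ∈ prox_f(y)`, i.e. `x` minimizes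
`u ↦ f u + ½‖u - y‖²` over the whole space. -/
def prox_prop (f : E → ℝ) (y : E) (x : E) : Prop :=
  IsMinOn (fun u => f u + ‖u - y‖ ^ 2 / 2) Set.univ x

variable [CompleteSpace E] [CompleteSpace F]

/-- Gradient of `x ↦ H (x, y)` at `x`. -/
noncomputable def grad_fst (H : WithLp 2 (E × F) → ℝ) (y : F) (x : E) : E :=
  gradient (fun t => H ((WithLp.equiv 2 (E × F)).symm (t, y))) x

/-- Gradient of `y ↦ H (x, y)` at `y`. -/
noncomputable def grad_snd (H : WithLp 2 (E × F) → ℝ) (x : E) (y : F) : F :=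
  gradient (fun t => H ((WithLp.equiv 2 (E × F)).symm (x, t))) y

/-- The proximal alternating linearized minimization (BCD) setting:
problem data (`f`, `g` lower semicontinuous and bounded below, `H` continuously
differentiable with `l`-Lipschitz gradient, `l > 0`) together with the iterates. -/
structure BCD (f : E → ℝ) (g : F → ℝ) (H : WithLp 2 (E × F) → ℝ) (l : NNReal)
    (x0 : E) (y0 : F) where
  lbdf : BddBelow (f '' Set.univ)
  lbdg : BddBelow (g '' Set.univ)
  hf : LowerSemicontinuous f
  hg : LowerSemicontinuous g
  conf : ContDiff ℝ 1 H
  lpos : (0 : ℝ) < l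
  lip : LipschitzWith l (gradient H)
  x : ℕ → E
  y : ℕ → F
  hx0 : x 0 = x0
  hy0 : y 0 = y0
  c : ℕ → ℝ
  d : ℕ → ℝ
  s₁ : ∀ k, prox_prop (c k • f) (x k - c k • grad_fst H (y k) (x k)) (x (k + 1))
  s₂ : ∀ k, prox_prop (d k • g) (y k - d k • grad_snd H (x (k + 1)) (y k)) (y (k + 1))

namespace BCD

variable {f : E → ℝ} {g : F → ℝ} {H : WithLp 2 (E × F) → ℝ} {l : NNReal} {x0 : E} {y0 : F}

/-- The combined iterate `z^k = (x^k, y^k)`. -/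
noncomputable def z (self : BCD f g H l x0 y0) : ℕ → WithLp 2 (E × F) :=
  fun n => (WithLp.equiv 2 (E × F)).symm (self.x n, self.y n)

/-- The objective `Ψ(x, y) = f x + g y + H (x, y)`. -/
noncomputable def ψ (_ : BCD f g H l x0 y0) : WithLp 2 (E × F) → ℝ :=
  fun z => f ((WithLp.equiv 2 (E × F)) z).1 + g ((WithLp.equiv 2 (E × F)) z).2 + H z

end BCD

section Helpers

lemma mem_f_subdifferential_iff {f : E → ℝ} {x u : E} :
    u ∈ f_subdifferential f x ↔
      ∀ ε : ℝ, 0 < ε → ∀ᶠ y in 𝓝 x, -(ε * ‖y - x‖) ≤ f y - f x - ⟪u, y - x⟫ := by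
  constructor
  · intro hu ε hε
    have h1 : ((-ε : ℝ) : EReal) <
        Filter.liminf (fun y => (((f y - f x - ⟪u, y - x⟫) / ‖y - x‖ : ℝ) : EReal)) (𝓝[≠] x) :=
      lt_of_lt_of_le (by exact_mod_cast neg_neg_iff_pos.mpr hε) hu
    have h2 := Filter.eventually_lt_of_lt_liminf h1
    rw [eventually_nhdsWithin_iff] at h2
    filter_upwards [h2] with y hy
    by_cases hyx : y = x
    · simp [hyx]
    · have hy' := hy hyx
      rw [EReal.coe_lt_coe_iff] at hy'
      have hn : (0:ℝ) < ‖y - x‖ := by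
        simpa [norm_pos_iff, sub_eq_zero] using hyx
      rw [lt_div_iff₀ hn] at hy'
      nlinarith
  · intro h
    by_contra hlt
    rw [f_subdifferential, Set.mem_setOf_eq, not_le] at hlt
    obtain ⟨r, hr1, hr2⟩ := EReal.exists_between_coe_real hlt
    have hrneg : r < 0 := by exact_mod_cast hr2
    have hev := (h (-r) (by linarith)).filter_mono (nhdsWithin_le_nhds (s := {x}ᶜ))
    have : (r : EReal) ≤
        Filter.liminf (fun y => (((f y - f x - ⟪u, y - x⟫) / ‖y - x‖ : ℝ) : EReal)) (𝓝[≠] x) := by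
      apply Filter.le_liminf_of_le (by isBoundedDefault)
      filter_upwards [hev, self_mem_nhdsWithin] with y hy (hyx : y ≠ x)
      have hn : (0:ℝ) < ‖y - x‖ := by
        simpa [norm_pos_iff, sub_eq_zero] using hyx
      rw [EReal.coe_le_coe_iff, le_div_iff₀ hn]
      nlinarith
    exact absurd hr1 (not_lt.mpr this)

lemma prox_mem_subdiff {f : E → ℝ} {c : ℝ} (hc : 0 < c) {y x : E}
    (h : prox_prop (c • f) y x) : c⁻¹ • (y - x) ∈ f_subdifferential f x := by
  rw [mem_f_subdifferential_iff]
  intro ε hε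
  have key : ∀ u : E, -(‖u - x‖ ^ 2) / (2 * c) ≤ f u - f x - ⟪c⁻¹ • (y - x), u - x⟫ := by
    intro u
    have hmin := h (Set.mem_univ u)
    simp only [Pi.smul_apply, smul_eq_mul] at hmin
    have hexp : ‖u - y‖ ^ 2 = ‖u - x‖ ^ 2 + 2 * ⟪u - x, x - y⟫ + ‖x - y‖ ^ 2 := by
      rw [show u - y = (u - x) + (x - y) by abel, @norm_add_sq_real]
    have hinner : ⟪c⁻¹ • (y - x), u - x⟫ = c⁻¹ * ⟪y - x, u - x⟫ := real_inner_smul_left _ _ _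
    have hsymm : ⟪u - x, x - y⟫ = -⟪y - x, u - x⟫ := by
      rw [real_inner_comm]; rw [show x - y = -(y - x) by abel, inner_neg_left]
    rw [hinner]
    have h2 : c * f x + ‖x - y‖ ^ 2 / 2 ≤ c * f u + ‖u - y‖ ^ 2 / 2 := hmin
    rw [div_le_iff₀ (by positivity)]
    have hc' : c⁻¹ * c = 1 := inv_mul_cancel₀ hc.ne'
    nlinarith [hexp, hsymm, h2]
  have hev : ∀ᶠ u in 𝓝 x, ‖u - x‖ < 2 * c * ε := by
    have := Metric.ball_mem_nhds x (show (0:ℝ) < 2 * c * ε by positivity)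
    filter_upwards [this] with u hu
    rw [Metric.mem_ball, dist_eq_norm] at hu; exact hu
  filter_upwards [hev] with u hu
  refine le_trans ?_ (key u)
  rw [neg_div, neg_le_neg_iff, div_le_iff₀ (by positivity)]
  nlinarith [norm_nonneg (u - x)]

lemma subdiff_add_grad [CompleteSpace E] {φ h : E → ℝ} {x u G : E}
    (hu : u ∈ f_subdifferential φ x) (hG : HasGradientAt h G x) :
    u + G ∈ f_subdifferential (fun z => φ z + h z) x := by
  rw [mem_f_subdifferential_iff]
  intro ε hε
  rw [mem_f_subdifferential_iff] at hu
  have h1 := hu (ε / 2) (by linarith)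
  have h2 : ∀ᶠ y in 𝓝 x, ‖h y - h x - ⟪G, y - x⟫‖ ≤ ε / 2 * ‖y - x‖ := by
    have := hG.hasFDerivAt
    rw [hasFDerivAt_iff_isLittleO] at this
    have := this.def (show (0:ℝ) < ε / 2 by linarith)
    filter_upwards [this] with y hy
    simpa [InnerProductSpace.toDual_apply_apply] using hy
  filter_upwards [h1, h2] with y hy1 hy2
  have hy2' : -(ε / 2 * ‖y - x‖) ≤ h y - h x - ⟪G, y - x⟫ := by
    have := (abs_le.mp (by rwa [Real.norm_eq_abs] at hy2)).1
    linarith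
  rw [inner_add_left]
  linarith

omit [InnerProductSpace ℝ E] [InnerProductSpace ℝ F] in
lemma norm_fst_le_L2 (a : WithLp 2 (E × F)) : ‖a.fst‖ ≤ ‖a‖ := by
  have h := WithLp.prod_norm_sq_eq_of_L2 a
  nlinarith [norm_nonneg a, norm_nonneg a.fst, norm_nonneg a.snd, sq_nonneg ‖a.snd‖]

omit [InnerProductSpace ℝ E] [InnerProductSpace ℝ F] in
lemma norm_snd_le_L2 (a : WithLp 2 (E × F)) : ‖a.snd‖ ≤ ‖a‖ := by
  have h := WithLp.prod_norm_sq_eq_of_L2 a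
  nlinarith [norm_nonneg a, norm_nonneg a.fst, norm_nonneg a.snd, sq_nonneg ‖a.fst‖]

omit [InnerProductSpace ℝ E] [InnerProductSpace ℝ F] in
lemma norm_le_add_L2 (a : WithLp 2 (E × F)) : ‖a‖ ≤ ‖a.fst‖ + ‖a.snd‖ := by
  have h := WithLp.prod_norm_sq_eq_of_L2 a
  nlinarith [norm_nonneg a, norm_nonneg a.fst, norm_nonneg a.snd,
    mul_nonneg (norm_nonneg a.fst) (norm_nonneg a.snd)]

omit [InnerProductSpace ℝ E] [InnerProductSpace ℝ F] in
lemma norm_snd_pair_L2 (b : F) :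
    ‖((WithLp.equiv 2 (E × F)).symm ((0 : E), b))‖ = ‖b‖ := by
  have h := WithLp.prod_norm_sq_eq_of_L2 ((WithLp.equiv 2 (E × F)).symm ((0 : E), b))
  have h1 : ((WithLp.equiv 2 (E × F)).symm ((0 : E), b)).fst = (0 : E) := rfl
  have h2 : ((WithLp.equiv 2 (E × F)).symm ((0 : E), b)).snd = b := rfl
  rw [h1, h2, norm_zero] at h
  simp only [ne_eq, OfNat.ofNat_ne_zero, not_false_eq_true, zero_pow, zero_add] at h
  have hn := norm_nonneg ((WithLp.equiv 2 (E × F)).symm ((0 : E), b))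
  have hb := norm_nonneg b
  calc ‖(WithLp.equiv 2 (E × F)).symm ((0 : E), b)‖
      = Real.sqrt (‖(WithLp.equiv 2 (E × F)).symm ((0 : E), b)‖ ^ 2) := (Real.sqrt_sq hn).symm
    _ = Real.sqrt (‖b‖ ^ 2) := by rw [h]
    _ = ‖b‖ := Real.sqrt_sq hb

lemma subdiff_prod {f : E → ℝ} {g : F → ℝ} {x : E} {y : F} {u : E} {v : F}
    (hu : u ∈ f_subdifferential f x) (hv : v ∈ f_subdifferential g y) :
    ((WithLp.equiv 2 (E × F)).symm (u, v)) ∈ f_subdifferential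
      (fun z : WithLp 2 (E × F) =>
        f ((WithLp.equiv 2 (E × F)) z).1 + g ((WithLp.equiv 2 (E × F)) z).2)
      ((WithLp.equiv 2 (E × F)).symm (x, y)) := by
  rw [mem_f_subdifferential_iff]
  intro ε hε
  rw [mem_f_subdifferential_iff] at hu hv
  set w : WithLp 2 (E × F) := (WithLp.equiv 2 (E × F)).symm (x, y) with hw
  have cfst : Continuous (fun z : WithLp 2 (E × F) => z.fst) :=
    continuous_fst.comp (WithLp.prodContinuousLinearEquiv 2 ℝ E F).continuous
  have csnd : Continuous (fun z : WithLp 2 (E × F) => z.snd) :=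
    continuous_snd.comp (WithLp.prodContinuousLinearEquiv 2 ℝ E F).continuous
  have tfst : Tendsto (fun z : WithLp 2 (E × F) => z.fst) (𝓝 w) (𝓝 x) := cfst.continuousAt
  have tsnd : Tendsto (fun z : WithLp 2 (E × F) => z.snd) (𝓝 w) (𝓝 y) := csnd.continuousAt
  have h1 := tfst.eventually (hu (ε / 2) (by linarith))
  have h2 := tsnd.eventually (hv (ε / 2) (by linarith))
  filter_upwards [h1, h2] with z hz1 hz2
  have e1 : z.fst - x = (z - w).fst := rfl
  have e2 : z.snd - y = (z - w).snd := rfl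
  have n1 : ‖z.fst - x‖ ≤ ‖z - w‖ := by rw [e1]; exact norm_fst_le_L2 _
  have n2 : ‖z.snd - y‖ ≤ ‖z - w‖ := by rw [e2]; exact norm_snd_le_L2 _
  have hin : ⟪(WithLp.equiv 2 (E × F)).symm (u, v), z - w⟫ =
      ⟪u, z.fst - x⟫ + ⟪v, z.snd - y⟫ := by
    rw [WithLp.prod_inner_apply]; rfl
  rw [hin]
  have b1 : -(ε / 2 * ‖z - w‖) ≤ -(ε / 2 * ‖z.fst - x‖) := by nlinarith
  have b2 : -(ε / 2 * ‖z - w‖) ≤ -(ε / 2 * ‖z.snd - y‖) := by nlinarith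
  simp only [WithLp.equiv_apply, WithLp.ofLp_fst, WithLp.ofLp_snd]
  have hz1' : -(ε / 2 * ‖z.fst - x‖) ≤ f z.fst - f x - ⟪u, z.fst - x⟫ := hz1
  have hz2' : -(ε / 2 * ‖z.snd - y‖) ≤ g z.snd - g y - ⟪v, z.snd - y⟫ := hz2
  have hwx : w.fst = x := rfl
  have hwy : w.snd = y := rfl
  rw [hwx, hwy]
  linarith

variable [CompleteSpace E] [CompleteSpace F]

lemma grad_fst_eq {H : WithLp 2 (E × F) → ℝ} (hH : ContDiff ℝ 1 H) (x : E) (y : F) :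
    grad_fst H y x = (gradient H ((WithLp.equiv 2 (E × F)).symm (x, y))).fst := by
  set w : WithLp 2 (E × F) := (WithLp.equiv 2 (E × F)).symm (x, y) with hw
  have hdiff : DifferentiableAt ℝ H w := (hH.differentiable one_ne_zero).differentiableAt
  have hGrad : HasGradientAt H (gradient H w) w := hdiff.hasGradientAt
  set G := gradient H w with hG
  have hFD : HasFDerivAt H (InnerProductSpace.toDual ℝ _ G) w := hGrad.hasFDerivAt
  set ι : E →L[ℝ] WithLp 2 (E × F) :=
    ((WithLp.prodContinuousLinearEquiv 2 ℝ E F).symm : (E × F) →L[ℝ] WithLp 2 (E × F)).comp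
      (ContinuousLinearMap.inl ℝ E F) with hι
  have hφ : HasFDerivAt (fun t : E => (WithLp.equiv 2 (E × F)).symm (t, y)) ι x := by
    have h0 : HasFDerivAt (fun t : E => ι t + (WithLp.equiv 2 (E × F)).symm (0, y)) ι x :=
      ι.hasFDerivAt.add_const _
    convert h0 using 1
    funext t
    apply (WithLp.equiv 2 (E × F)).injective
    simp [WithLp.ofLp_add, hι, Prod.mk_add_mk]
  have hcomp : HasFDerivAt (fun t : E => H ((WithLp.equiv 2 (E × F)).symm (t, y)))
      ((InnerProductSpace.toDual ℝ _ G).comp ι) x := HasFDerivAt.comp x (by exact hFD) hφ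
  have hkey : (InnerProductSpace.toDual ℝ (WithLp 2 (E × F)) G).comp ι =
      InnerProductSpace.toDual ℝ E G.fst := by
    ext t
    simp only [ContinuousLinearMap.coe_comp', Function.comp_apply,
      InnerProductSpace.toDual_apply_apply]
    rw [WithLp.prod_inner_apply, WithLp.ofLp_fst, WithLp.ofLp_fst, WithLp.ofLp_snd, WithLp.ofLp_snd]
    have h1 : (ι t).fst = t := rfl
    have h2 : (ι t).snd = (0 : F) := rfl
    rw [h1, h2, inner_zero_right, add_zero]
  rw [hkey] at hcomp
  exact ((hasGradientAt_iff_hasFDerivAt).mpr hcomp).gradient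

lemma grad_snd_eq {H : WithLp 2 (E × F) → ℝ} (hH : ContDiff ℝ 1 H) (x : E) (y : F) :
    grad_snd H x y = (gradient H ((WithLp.equiv 2 (E × F)).symm (x, y))).snd := by
  set w : WithLp 2 (E × F) := (WithLp.equiv 2 (E × F)).symm (x, y) with hw
  have hdiff : DifferentiableAt ℝ H w := (hH.differentiable one_ne_zero).differentiableAt
  have hGrad : HasGradientAt H (gradient H w) w := hdiff.hasGradientAt
  set G := gradient H w with hG
  have hFD : HasFDerivAt H (InnerProductSpace.toDual ℝ _ G) w := hGrad.hasFDerivAt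
  set ι : F →L[ℝ] WithLp 2 (E × F) :=
    ((WithLp.prodContinuousLinearEquiv 2 ℝ E F).symm : (E × F) →L[ℝ] WithLp 2 (E × F)).comp
      (ContinuousLinearMap.inr ℝ E F) with hι
  have hφ : HasFDerivAt (fun t : F => (WithLp.equiv 2 (E × F)).symm (x, t)) ι y := by
    have h0 : HasFDerivAt (fun t : F => ι t + (WithLp.equiv 2 (E × F)).symm (x, 0)) ι y :=
      ι.hasFDerivAt.add_const _
    convert h0 using 1
    funext t
    apply (WithLp.equiv 2 (E × F)).injective
    simp [WithLp.ofLp_add, hι, Prod.mk_add_mk]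
  have hcomp : HasFDerivAt (fun t : F => H ((WithLp.equiv 2 (E × F)).symm (x, t)))
      ((InnerProductSpace.toDual ℝ _ G).comp ι) y := HasFDerivAt.comp y (by exact hFD) hφ
  have hkey : (InnerProductSpace.toDual ℝ (WithLp 2 (E × F)) G).comp ι =
      InnerProductSpace.toDual ℝ F G.snd := by
    ext t
    simp only [ContinuousLinearMap.coe_comp', Function.comp_apply,
      InnerProductSpace.toDual_apply_apply]
    rw [WithLp.prod_inner_apply, WithLp.ofLp_fst, WithLp.ofLp_fst, WithLp.ofLp_snd, WithLp.ofLp_snd]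
    have h1 : (ι t).fst = (0 : E) := rfl
    have h2 : (ι t).snd = t := rfl
    rw [h1, h2, inner_zero_right, zero_add]
  rw [hkey] at hcomp
  exact ((hasGradientAt_iff_hasFDerivAt).mpr hcomp).gradient

end Helpers


theorem Ψ_subdiff_bound {E : Type*} [NormedAddCommGroup E] [InnerProductSpace ℝ E]
    [CompleteSpace E] {F : Type*} [NormedAddCommGroup F] [InnerProductSpace ℝ F]
    [CompleteSpace F] {f : E → ℝ} {g : F → ℝ} {H : WithLp 2 (E × F) → ℝ} {l : NNReal}
    {x0 : E} {y0 : F} (alg : BCD f g H l x0 y0) (γ : ℝ) (hγ : γ > 1)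
    (ck : ∀ k, alg.c k = 1 / (γ * l)) (dk : ∀ k, alg.d k = 1 / (γ * l)) :
    ∃ ρ > (0 : ℝ), ∀ k, ∃ dΨ ∈ f_subdifferential alg.ψ (alg.z (k + 1)),
      ‖dΨ‖ ≤ ρ * ‖alg.z (k + 1) - alg.z k‖ := by
  have hl : (0:ℝ) < l := alg.lpos
  have hγ0 : (0:ℝ) < γ := lt_trans one_pos hγ
  have ht : (0:ℝ) < γ * l := mul_pos hγ0 hl
  refine ⟨2 * (γ * ↑l + ↑l), by positivity, fun k => ?_⟩
  have hc : alg.c k = 1 / (γ * ↑l) := ck k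
  have hd : alg.d k = 1 / (γ * ↑l) := dk k
  have hcpos : 0 < alg.c k := by rw [hc]; positivity
  have hdpos : 0 < alg.d k := by rw [hd]; positivity
  have hcinv : (alg.c k)⁻¹ = γ * ↑l := by rw [hc]; simp
  have hdinv : (alg.d k)⁻¹ = γ * ↑l := by rw [hd]; simp
  have hu := prox_mem_subdiff hcpos (alg.s₁ k)
  have hv := prox_mem_subdiff hdpos (alg.s₂ k)
  set t : ℝ := γ * ↑l with hts
  set gf : E := grad_fst H (alg.y k) (alg.x k) with hgf
  set gs : F := grad_snd H (alg.x (k + 1)) (alg.y k) with hgs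
  have hueq : (alg.c k)⁻¹ • (alg.x k - alg.c k • gf - alg.x (k + 1))
      = t • (alg.x k - alg.x (k + 1)) - gf := by
    rw [show alg.x k - alg.c k • gf - alg.x (k + 1)
        = (alg.x k - alg.x (k + 1)) - alg.c k • gf by abel,
      smul_sub, smul_smul, inv_mul_cancel₀ hcpos.ne', one_smul, hcinv]
  have hveq : (alg.d k)⁻¹ • (alg.y k - alg.d k • gs - alg.y (k + 1))
      = t • (alg.y k - alg.y (k + 1)) - gs := by
    rw [show alg.y k - alg.d k • gs - alg.y (k + 1)
        = (alg.y k - alg.y (k + 1)) - alg.d k • gs by abel,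
      smul_sub, smul_smul, inv_mul_cancel₀ hdpos.ne', one_smul, hdinv]
  rw [hueq] at hu
  rw [hveq] at hv
  set u : E := t • (alg.x k - alg.x (k + 1)) - gf with hudef
  set v : F := t • (alg.y k - alg.y (k + 1)) - gs with hvdef
  set G : WithLp 2 (E × F) := gradient H (alg.z (k + 1)) with hGdef
  have hGrad : HasGradientAt H G (alg.z (k + 1)) :=
    ((alg.conf.differentiable one_ne_zero) (alg.z (k + 1))).hasGradientAt
  have hmem0 := subdiff_add_grad (subdiff_prod hu hv) hGrad
  refine ⟨(WithLp.equiv 2 (E × F)).symm (u, v) + G, hmem0, ?_⟩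
  -- now the norm bound
  set dΨ : WithLp 2 (E × F) := (WithLp.equiv 2 (E × F)).symm (u, v) + G with hdΨ
  have hd1 : dΨ.fst = u + G.fst := rfl
  have hd2 : dΨ.snd = v + G.snd := rfl
  have hnorm : ‖dΨ‖ ≤ ‖u + G.fst‖ + ‖v + G.snd‖ := by
    rw [← hd1, ← hd2]; exact norm_le_add_L2 dΨ
  set Δ : WithLp 2 (E × F) := alg.z (k + 1) - alg.z k with hΔ
  have hΔ1 : Δ.fst = alg.x (k + 1) - alg.x k := rfl
  have hΔ2 : Δ.snd = alg.y (k + 1) - alg.y k := rfl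
  have hΔx : ‖alg.x k - alg.x (k + 1)‖ ≤ ‖Δ‖ := by
    rw [norm_sub_rev, ← hΔ1]; exact norm_fst_le_L2 Δ
  have hΔy : ‖alg.y k - alg.y (k + 1)‖ ≤ ‖Δ‖ := by
    rw [norm_sub_rev, ← hΔ2]; exact norm_snd_le_L2 Δ
  -- first component bound
  have hgf1 : gf = (gradient H (alg.z k)).fst := grad_fst_eq alg.conf (alg.x k) (alg.y k)
  have hlip1 : ‖G - gradient H (alg.z k)‖ ≤ (l : ℝ) * ‖Δ‖ := by
    have := alg.lip.dist_le_mul (alg.z (k + 1)) (alg.z k)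
    rwa [dist_eq_norm, dist_eq_norm] at this
  have hb1 : ‖u + G.fst‖ ≤ t * ‖Δ‖ + (l : ℝ) * ‖Δ‖ := by
    have heq : u + G.fst = t • (alg.x k - alg.x (k + 1)) + (G - gradient H (alg.z k)).fst := by
      rw [hudef, hgf1]
      have : (G - gradient H (alg.z k)).fst = G.fst - (gradient H (alg.z k)).fst := rfl
      rw [this]; abel
    rw [heq]
    refine le_trans (norm_add_le _ _) (add_le_add ?_ ?_)
    · rw [norm_smul, Real.norm_eq_abs, abs_of_pos ht]
      exact mul_le_mul_of_nonneg_left hΔx (le_of_lt ht)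
    · exact le_trans (norm_fst_le_L2 _) hlip1
  -- second component bound
  set w : WithLp 2 (E × F) := (WithLp.equiv 2 (E × F)).symm (alg.x (k + 1), alg.y k) with hwdef
  have hgs1 : gs = (gradient H w).snd := grad_snd_eq alg.conf (alg.x (k + 1)) (alg.y k)
  have hzw : alg.z (k + 1) - w
      = (WithLp.equiv 2 (E × F)).symm (0, alg.y (k + 1) - alg.y k) := by
    apply (WithLp.equiv 2 (E × F)).injective
    simp only [WithLp.equiv_apply, WithLp.ofLp_sub]
    ext
    · exact sub_self _
    · rfl
  have hlip2 : ‖G - gradient H w‖ ≤ (l : ℝ) * ‖Δ‖ := by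
    have h1 := alg.lip.dist_le_mul (alg.z (k + 1)) w
    rw [dist_eq_norm, dist_eq_norm, hzw, norm_snd_pair_L2] at h1
    refine le_trans h1 (mul_le_mul_of_nonneg_left ?_ (le_of_lt hl))
    rw [← hΔ2]; exact norm_snd_le_L2 Δ
  have hb2 : ‖v + G.snd‖ ≤ t * ‖Δ‖ + (l : ℝ) * ‖Δ‖ := by
    have heq : v + G.snd = t • (alg.y k - alg.y (k + 1)) + (G - gradient H w).snd := by
      rw [hvdef, hgs1]
      have : (G - gradient H w).snd = G.snd - (gradient H w).snd := rfl
      rw [this]; abel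
    rw [heq]
    refine le_trans (norm_add_le _ _) (add_le_add ?_ ?_)
    · rw [norm_smul, Real.norm_eq_abs, abs_of_pos ht]
      exact mul_le_mul_of_nonneg_left hΔy (le_of_lt ht)
    · exact le_trans (norm_snd_le_L2 _) hlip2
  calc ‖dΨ‖ ≤ ‖u + G.fst‖ + ‖v + G.snd‖ := hnorm
    _ ≤ (t * ‖Δ‖ + (l : ℝ) * ‖Δ‖) + (t * ‖Δ‖ + (l : ℝ) * ‖Δ‖) := add_le_add hb1 hb2
    _ = 2 * (γ * ↑l + ↑l) * ‖Δ‖ := by rw [hts]; ring
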